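/- In the noise-free setting under Assumption 1, let A ⊆ A† with B = A†∖A, let d ∈ ℝ^p have |d_i| = λ for all i ∈ A, let x_A = (Ψ_AᵗΨ_A)⁻¹(Ψ_Aᵗ y − d_A), define d_i = Ψ_iᵗ(y − Ψ_A x_A) for i ∉ A, and let i_A be an index maximizing |x†_i| over i ∈ A^c. Then for every i ∉ A† one has |d_i| ≤ ¼|x†_{i_A}| + ¼λ. -/

import Mathlib

/-!
Let `g = x† - x_A` (with `x_A` extended by zero); it is supported on `A†` and `y - Ψ_A x_A = Ψg`.
The normal equations say that `d = ΨᵀΨg` on `A`, and by definition also off `A`. Split `g = u + v`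
with `u` supported on `A` and `v = x†` on `B`. The RIP gives `|⟨Ψa, Ψb⟩| ≤ δ‖a‖‖b‖` for disjointly
supported `a, b` with joint support of size at most `T + 1`. Applied to `u, v` it yields
`(1 - δ)‖u‖ ≤ δ‖v‖ + √|A| λ`, and applied to `e_i, g` for `i ∉ A†` it yields
`|d_i| ≤ δ(‖u‖ + ‖v‖)`. Since `‖v‖ ≤ √T |x†_{i_A}|`, together
`(1 - δ)|d_i| ≤ δ√T (|x†_{i_A}| + λ)`, and `δ(4√T + 1) ≤ 1` turns this into the factor `¼`.
-/

open Matrix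

/-- The submatrix `Ψ_A` of `Ψ` consisting of the columns indexed by `A`. -/
def colSub {n p : ℕ} (Ψ : Matrix (Fin n) (Fin p) ℝ) (A : Finset (Fin p)) :
    Matrix (Fin n) {i // i ∈ A} ℝ :=
  Matrix.of fun i j => Ψ i j.1

/-- `Ψ` satisfies the restricted isometry property of order `k` with constant `δ`:
`(1 − δ)‖x‖₂² ≤ ‖Ψx‖₂² ≤ (1 + δ)‖x‖₂²` for all `x` with at most `k` nonzero entries. -/
def HasRIP {n p : ℕ} (Ψ : Matrix (Fin n) (Fin p) ℝ) (k : ℕ) (δ : ℝ) : Prop :=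
  ∀ x : Fin p → ℝ, (Finset.univ.filter (fun i => x i ≠ 0)).card ≤ k →
    (1 - δ) * (∑ i, x i ^ 2) ≤ ∑ j, (Ψ *ᵥ x) j ^ 2 ∧
      ∑ j, (Ψ *ᵥ x) j ^ 2 ≤ (1 + δ) * (∑ i, x i ^ 2)

open Finset

section EuclideanSums

variable {ι : Type*} [Fintype ι]

lemma card_filter_ne_zero_le {S : Finset ι} {x : ι → ℝ} (hx : ∀ i ∉ S, x i = 0) :
    #{i | x i ≠ 0} ≤ #S :=
  card_le_card fun i hi => by
    by_contra h
    simp [hx i h] at hi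

lemma sqrt_sum_sq_add_le (u v : ι → ℝ) :
    √(∑ i, (u + v) i ^ 2) ≤ √(∑ i, u i ^ 2) + √(∑ i, v i ^ 2) := by
  simpa [EuclideanSpace.norm_eq] using norm_add_le (WithLp.toLp 2 u) (WithLp.toLp 2 v)

lemma abs_dotProduct_le (u v : ι → ℝ) :
    |u ⬝ᵥ v| ≤ √(∑ i, u i ^ 2) * √(∑ i, v i ^ 2) := by
  simpa [EuclideanSpace.norm_eq, dotProduct, PiLp.inner_apply, mul_comm] using
    abs_real_inner_le_norm (WithLp.toLp 2 u) (WithLp.toLp 2 v)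

lemma sqrt_sum_sq_le_of_support {S : Finset ι} {u : ι → ℝ} {c : ℝ} (hc : 0 ≤ c)
    (hu : ∀ i ∉ S, u i = 0) (hbound : ∀ i ∈ S, |u i| ≤ c) :
    √(∑ i, u i ^ 2) ≤ √(#S : ℝ) * c := by
  have hsum : ∑ i, u i ^ 2 ≤ #S * c ^ 2 := by
    rw [← sum_subset (subset_univ S) fun i _ hi => by simp [hu i hi]]
    calc ∑ i ∈ S, u i ^ 2 ≤ ∑ _i ∈ S, c ^ 2 :=
          sum_le_sum fun i hi => by
            rw [← sq_abs]
            exact pow_le_pow_left₀ (abs_nonneg _) (hbound i hi) 2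
      _ = #S * c ^ 2 := by simp
  calc √(∑ i, u i ^ 2) ≤ √(#S * c ^ 2) := Real.sqrt_le_sqrt hsum
    _ = √(#S : ℝ) * c := by rw [Real.sqrt_mul (Nat.cast_nonneg _), Real.sqrt_sq hc]

lemma abs_dotProduct_le_of_support {S : Finset ι} {u z : ι → ℝ} {c : ℝ} (hc : 0 ≤ c)
    (hu : ∀ i ∉ S, u i = 0) (hz : ∀ i ∈ S, |z i| ≤ c) :
    |u ⬝ᵥ z| ≤ √(∑ i, u i ^ 2) * (√(#S : ℝ) * c) := by
  have hrestrict : u ⬝ᵥ z = u ⬝ᵥ (S : Set ι).indicator z :=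
    sum_congr rfl fun i _ => by by_cases hi : i ∈ S <;> simp [hi, hu]
  rw [hrestrict]
  refine (abs_dotProduct_le _ _).trans (mul_le_mul_of_nonneg_left ?_ (Real.sqrt_nonneg _))
  exact sqrt_sum_sq_le_of_support hc (fun i hi => by simp [hi])
    (fun i hi => by simpa [hi] using hz i hi)

end EuclideanSums

section ColumnSubmatrix

variable {n p : ℕ} {A : Finset (Fin p)}

lemma extend_val_apply_of_notMem (w : A → ℝ) {i : Fin p} (hi : i ∉ A) :
    Function.extend Subtype.val w 0 i = 0 :=
  Function.extend_apply' _ _ _ fun ⟨j, hj⟩ => hi (hj ▸ j.2)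

lemma colSub_mulVec (Ψ : Matrix (Fin n) (Fin p) ℝ) (w : A → ℝ) :
    colSub Ψ A *ᵥ w = Ψ *ᵥ Function.extend Subtype.val w 0 := by
  ext i
  simp only [mulVec, dotProduct, colSub, of_apply]
  rw [← sum_subset (subset_univ A) fun j _ hj => by rw [extend_val_apply_of_notMem w hj, mul_zero],
    ← sum_coe_sort A]
  simp

end ColumnSubmatrix

lemma transpose_mulVec_residual_eq {R m k : Type*} [CommRing R] [Fintype m] [Fintype k]
    [DecidableEq k] (M : Matrix m k R) (hM : IsUnit (Mᵀ * M).det) (y : m → R) (c : k → R) :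
    Mᵀ *ᵥ (y - M *ᵥ ((Mᵀ * M)⁻¹ *ᵥ (Mᵀ *ᵥ y - c))) = c := by
  rw [mulVec_sub, mulVec_mulVec, mulVec_mulVec, mul_nonsing_inv _ hM,
    one_mulVec, sub_sub_cancel]

lemma eq_transpose_mulVec_residual {n p : ℕ} {Ψ : Matrix (Fin n) (Fin p) ℝ} {A : Finset (Fin p)}
    (hG : IsUnit ((colSub Ψ A)ᵀ * colSub Ψ A).det) {y : Fin n → ℝ} {d : Fin p → ℝ}
    {xA : A → ℝ}
    (hxA : xA = ((colSub Ψ A)ᵀ * colSub Ψ A)⁻¹ *ᵥ ((colSub Ψ A)ᵀ *ᵥ y - fun j => d j.1))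
    (hdI : ∀ i ∉ A, d i = (Ψᵀ *ᵥ (y - colSub Ψ A *ᵥ xA)) i) (j : Fin p) :
    d j = (Ψᵀ *ᵥ (y - colSub Ψ A *ᵥ xA)) j := by
  by_cases hj : j ∈ A
  · have hnormal := transpose_mulVec_residual_eq (colSub Ψ A) hG y fun j => d j.1
    rw [← hxA] at hnormal
    exact (congrFun hnormal ⟨j, hj⟩).symm
  · exact hdI j hj

namespace HasRIP

variable {n p k : ℕ} {Ψ : Matrix (Fin n) (Fin p) ℝ} {δ : ℝ} {S S' : Finset (Fin p)}

lemma lower_bound (h : HasRIP Ψ k δ) {x : Fin p → ℝ} (hx : ∀ i ∉ S, x i = 0) (hS : #S ≤ k) :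
    (1 - δ) * ∑ i, x i ^ 2 ≤ ∑ j, (Ψ *ᵥ x) j ^ 2 :=
  (h x ((card_filter_ne_zero_le hx).trans hS)).1

lemma isUnit_det_gram (h : HasRIP Ψ k δ) (hδ : δ < 1) {A : Finset (Fin p)} (hA : #A ≤ k) :
    IsUnit ((colSub Ψ A)ᵀ * colSub Ψ A).det := by
  have hinj : Function.Injective (colSub Ψ A).mulVec := by
    intro a b hab
    set x := Function.extend Subtype.val (a - b) 0
    have hΨx : Ψ *ᵥ x = 0 := by rw [← colSub_mulVec, mulVec_sub, hab, sub_self]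
    have hlow := h.lower_bound (x := x) (fun i hi => extend_val_apply_of_notMem _ hi) hA
    simp only [hΨx, Pi.zero_apply, zero_pow two_ne_zero, sum_const_zero] at hlow
    have hsum : ∑ i, x i ^ 2 = 0 := by
      nlinarith [sum_nonneg fun i (_ : i ∈ univ) => sq_nonneg (x i)]
    funext j
    have hj := (sum_eq_zero_iff_of_nonneg fun i _ => sq_nonneg (x i)).1 hsum j.1 (mem_univ _)
    simpa [x, Subtype.val_injective.extend_apply, sub_eq_zero] using hj
  have hG := (PosDef.conjTranspose_mul_self _ hinj).isUnit
  rw [conjTranspose_eq_transpose_of_trivial] at hG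
  exact (isUnit_iff_isUnit_det _).1 hG

/-- Polarization: `‖Ψ(u + v)‖² - ‖Ψ(u - v)‖² = 4⟨Ψu, Ψv⟩`, while `u ± v` both have squared norm
`‖u‖² + ‖v‖²` by disjointness of the supports. -/
lemma two_mul_dotProduct_le (h : HasRIP Ψ k δ) {u v : Fin p → ℝ} (hu : ∀ i ∉ S, u i = 0)
    (hv : ∀ i ∉ S', v i = 0) (hSS' : Disjoint S S') (hk : #S + #S' ≤ k) :
    2 * ((Ψ *ᵥ u) ⬝ᵥ (Ψ *ᵥ v)) ≤ δ * (∑ i, u i ^ 2 + ∑ i, v i ^ 2) := by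
  have hmul : ∀ i, u i * v i = 0 := fun i => by
    by_cases hi : i ∈ S
    · simp [hv i (disjoint_left.1 hSS' hi)]
    · simp [hu i hi]
  have hcard : #(S ∪ S') ≤ k := (card_union_le S S').trans hk
  have hout : ∀ i ∉ S ∪ S', u i = 0 ∧ v i = 0 := fun i hi => by
    rw [mem_union, not_or] at hi
    exact ⟨hu i hi.1, hv i hi.2⟩
  have hplus := (h (u + v) ((card_filter_ne_zero_le (S := S ∪ S')
    fun i hi => by simp [hout i hi]).trans hcard)).2
  have hminus := (h (u - v) ((card_filter_ne_zero_le (S := S ∪ S')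
    fun i hi => by simp [hout i hi]).trans hcard)).1
  have hnorm_add : ∑ i, (u + v) i ^ 2 = ∑ i, u i ^ 2 + ∑ i, v i ^ 2 := by
    rw [← sum_add_distrib]
    exact sum_congr rfl fun i _ => by simp only [Pi.add_apply]; linear_combination 2 * hmul i
  have hnorm_sub : ∑ i, (u - v) i ^ 2 = ∑ i, u i ^ 2 + ∑ i, v i ^ 2 := by
    rw [← sum_add_distrib]
    exact sum_congr rfl fun i _ => by simp only [Pi.sub_apply]; linear_combination -2 * hmul i
  have hpolar : ∑ j, (Ψ *ᵥ (u + v)) j ^ 2 - ∑ j, (Ψ *ᵥ (u - v)) j ^ 2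
      = 4 * ((Ψ *ᵥ u) ⬝ᵥ (Ψ *ᵥ v)) := by
    rw [mulVec_add, mulVec_sub, ← sum_sub_distrib, dotProduct, mul_sum]
    exact sum_congr rfl fun j _ => by simp only [Pi.add_apply, Pi.sub_apply]; ring
  rw [hnorm_add] at hplus
  rw [hnorm_sub] at hminus
  linarith

lemma abs_dotProduct_le (h : HasRIP Ψ k δ) (hδ : 0 ≤ δ) {u v : Fin p → ℝ}
    (hu : ∀ i ∉ S, u i = 0) (hv : ∀ i ∉ S', v i = 0) (hSS' : Disjoint S S')
    (hk : #S + #S' ≤ k) :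
    |(Ψ *ᵥ u) ⬝ᵥ (Ψ *ᵥ v)| ≤ δ * √(∑ i, u i ^ 2) * √(∑ i, v i ^ 2) := by
  set P := (Ψ *ᵥ u) ⬝ᵥ (Ψ *ᵥ v)
  set a := ∑ i, u i ^ 2
  set b := ∑ i, v i ^ 2
  -- the bound `2⟨Ψ(tu), Ψv⟩ ≤ δ(t²a + b)` for every `t` makes a quadratic in `t` nonnegative
  have hquad : ∀ t : ℝ, 0 ≤ (δ * a) * (t * t) + (-2 * P) * t + δ * b := by
    intro t
    have ht := h.two_mul_dotProduct_le (u := t • u) (fun i hi => by simp [hu i hi]) hv hSS' hk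
    simp only [mulVec_smul, smul_dotProduct, Pi.smul_apply, smul_eq_mul, mul_pow,
      ← mul_sum] at ht
    linarith
  have hdisc := discrim_le_zero hquad
  rw [discrim] at hdisc
  refine abs_le_of_sq_le_sq ?_ (by positivity)
  rw [mul_pow, mul_pow, Real.sq_sqrt (by positivity), Real.sq_sqrt (by positivity)]
  nlinarith

lemma abs_transpose_mulVec_mulVec_le (h : HasRIP Ψ (#S + 1) δ) (hδ : 0 ≤ δ) {g : Fin p → ℝ}
    (hg : ∀ j ∉ S, g j = 0) {i : Fin p} (hi : i ∉ S) :
    |(Ψᵀ *ᵥ (Ψ *ᵥ g)) i| ≤ δ * √(∑ j, g j ^ 2) := by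
  have hcol : (Ψᵀ *ᵥ (Ψ *ᵥ g)) i = (Ψ *ᵥ Pi.single i 1) ⬝ᵥ (Ψ *ᵥ g) := by
    rw [mulVec_single_one]; rfl
  have hsingle : ∑ j, (Pi.single i 1 : Fin p → ℝ) j ^ 2 = 1 := by
    simp [Pi.single_apply]
  have := h.abs_dotProduct_le hδ (S := {i}) (u := Pi.single i 1)
    (fun j hj => Pi.single_eq_of_ne (by simpa using hj) 1) hg (disjoint_singleton_left.2 hi)
    (by rw [card_singleton, add_comm])
  rw [hcol]
  rwa [hsingle, Real.sqrt_one, mul_one] at this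

/-- `‖Ψu‖² = ⟨u, ΨᵀΨ(u + v)⟩ - ⟨Ψu, Ψv⟩`: the first term is bounded by Cauchy–Schwarz on `S`,
the second by the RIP cross bound. -/
lemma one_sub_mul_sqrt_le (h : HasRIP Ψ k δ) (hδ : 0 ≤ δ) {u v : Fin p → ℝ}
    (hu : ∀ i ∉ S, u i = 0) (hv : ∀ i ∉ S', v i = 0) (hSS' : Disjoint S S')
    (hk : #S + #S' ≤ k) {c : ℝ} (hc : 0 ≤ c)
    (hcorr : ∀ j ∈ S, |(Ψᵀ *ᵥ (Ψ *ᵥ (u + v))) j| ≤ c) :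
    (1 - δ) * √(∑ i, u i ^ 2) ≤ δ * √(∑ i, v i ^ 2) + √(#S : ℝ) * c := by
  set U := √(∑ i, u i ^ 2)
  set V := √(∑ i, v i ^ 2)
  have hlow : (1 - δ) * U ^ 2 ≤ (Ψ *ᵥ u) ⬝ᵥ (Ψ *ᵥ u) := by
    rw [Real.sq_sqrt (by positivity)]
    simpa [dotProduct, sq] using h.lower_bound hu (le_of_add_le_left hk)
  have hsplit : (Ψ *ᵥ u) ⬝ᵥ (Ψ *ᵥ u)
      = u ⬝ᵥ (Ψᵀ *ᵥ (Ψ *ᵥ (u + v))) - (Ψ *ᵥ u) ⬝ᵥ (Ψ *ᵥ v) := by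
    rw [dotProduct_mulVec u Ψᵀ, vecMul_transpose, mulVec_add, dotProduct_add,
      add_sub_cancel_right]
  have hcorr_le : u ⬝ᵥ (Ψᵀ *ᵥ (Ψ *ᵥ (u + v))) ≤ U * (√(#S : ℝ) * c) :=
    (le_abs_self _).trans (abs_dotProduct_le_of_support hc hu hcorr)
  have hcross_le : -((Ψ *ᵥ u) ⬝ᵥ (Ψ *ᵥ v)) ≤ δ * U * V :=
    (neg_le_abs _).trans (h.abs_dotProduct_le hδ hu hv hSS' hk)
  have hquad : (1 - δ) * U * U ≤ (δ * V + √(#S : ℝ) * c) * U := by nlinarith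
  rcases (Real.sqrt_nonneg _ : 0 ≤ U).eq_or_lt with hU | hU
  · rw [show U = 0 from hU.symm, mul_zero]
    positivity
  · exact le_of_mul_le_mul_right hquad hU

end HasRIP

lemma le_quarter_of_rip_bounds {δ R X lam σ U a D : ℝ} (hδ0 : 0 ≤ δ) (hδ1 : δ < 1)
    (hδR : δ * (4 * R + 1) ≤ 1) (hX : 0 ≤ X) (hlam : 0 ≤ lam) (hσ : σ ≤ R) (ha : a ≤ R * X)
    (hU : (1 - δ) * U ≤ δ * a + σ * lam) (hD : D ≤ δ * (U + a)) :
    D ≤ 1 / 4 * X + 1 / 4 * lam := by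
  have h1 : (1 - δ) * D ≤ δ * R * (X + lam) := by
    nlinarith [mul_le_mul_of_nonneg_left hD (by linarith : 0 ≤ 1 - δ),
      mul_le_mul_of_nonneg_left hU hδ0, mul_le_mul_of_nonneg_left ha hδ0,
      mul_le_mul_of_nonneg_left hσ (mul_nonneg hδ0 hlam)]
  nlinarith [mul_le_mul_of_nonneg_right hδR (by linarith : 0 ≤ X + lam)]

theorem stmt_13_general {n p : ℕ} (Ψ : Matrix (Fin n) (Fin p) ℝ)
    (xdag : Fin p → ℝ) (Adag : Finset (Fin p))
    (hAdag : Adag = Finset.univ.filter (fun i => xdag i ≠ 0))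
    (T : ℕ) (hT : T = Adag.card)
    (y : Fin n → ℝ) (hy : y = Ψ *ᵥ xdag)
    (δ : ℝ) (hδ0 : 0 < δ) (hδ1 : δ < 1)
    (hRIP : HasRIP Ψ (T + 1) δ)
    (hAss1 : δ ≤ 1 / (4 * Real.sqrt T + 1))
    (lam : ℝ) (hlam : 0 < lam)
    (A : Finset (Fin p)) (hA : A ⊆ Adag)
    (B : Finset (Fin p)) (hB : B = Adag \ A)
    (d : Fin p → ℝ) (hdA : ∀ i ∈ A, |d i| = lam)
    (xA : {i // i ∈ A} → ℝ)
    (hxA : xA = ((colSub Ψ A)ᵀ * colSub Ψ A)⁻¹ *ᵥ ((colSub Ψ A)ᵀ *ᵥ y - fun j => d j.1))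
    (hdI : ∀ i ∉ A, d i = (Ψᵀ *ᵥ (y - colSub Ψ A *ᵥ xA)) i)
    (iA : Fin p) (hmax : ∀ j ∉ A, |xdag j| ≤ |xdag iA|) :
    ∀ i ∉ Adag, |d i| ≤ 1 / 4 * |xdag iA| + 1 / 4 * lam := by
  intro i hi
  have hxdag : ∀ j ∉ Adag, xdag j = 0 := fun j hj => by
    by_contra hne
    exact hj (hAdag ▸ mem_filter.2 ⟨mem_univ j, hne⟩)
  have hcard : #A + #B = T := by rw [hB, hT, add_comm, card_sdiff_add_card_eq_card hA]
  have hAB : Disjoint A B := hB ▸ disjoint_sdiff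
  set g := xdag - Function.extend Subtype.val xA 0
  have hg : ∀ j ∉ Adag, g j = 0 := fun j hj => by
    simp [g, hxdag j hj, extend_val_apply_of_notMem xA fun hjA => hj (hA hjA)]
  have hres : y - colSub Ψ A *ᵥ xA = Ψ *ᵥ g := by rw [colSub_mulVec, mulVec_sub, hy]
  have hd : ∀ j, d j = (Ψᵀ *ᵥ (Ψ *ᵥ g)) j := fun j => by
    rw [eq_transpose_mulVec_residual (hRIP.isUnit_det_gram hδ1 (by omega)) hxA hdI j, hres]
  set v := (B : Set (Fin p)).indicator xdag
  set u := g - v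
  have hv : ∀ j ∉ B, v j = 0 := fun j hj => Set.indicator_of_notMem hj _
  have hu : ∀ j ∉ A, u j = 0 := fun j hjA => by
    by_cases hjB : j ∈ B
    · simp [u, g, v, hjB, extend_val_apply_of_notMem xA hjA]
    · have hjAdag : j ∉ Adag := fun hj => hjB (hB ▸ mem_sdiff.2 ⟨hj, hjA⟩)
      simp [u, hg j hjAdag, hv j hjB]
  have hguv : u + v = g := sub_add_cancel g v
  have hU := hRIP.one_sub_mul_sqrt_le hδ0.le hu hv hAB (by omega) hlam.le
    fun j hj => by rw [hguv, ← hd, hdA j hj]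
  have hvX : √(∑ j, v j ^ 2) ≤ √(T : ℝ) * |xdag iA| :=
    (sqrt_sum_sq_le_of_support (abs_nonneg _) hv fun j hj => by
        simpa [v, hj] using hmax j (mem_sdiff.1 (hB ▸ hj)).2).trans
      (by gcongr; omega)
  have hD : |d i| ≤ δ * (√(∑ j, u j ^ 2) + √(∑ j, v j ^ 2)) := by
    rw [hd]
    refine ((hT ▸ hRIP).abs_transpose_mulVec_mulVec_le hδ0.le hg hi).trans ?_
    rw [← hguv]
    gcongr
    exact sqrt_sum_sq_add_le u v
  exact le_quarter_of_rip_bounds hδ0.le hδ1 ((le_div_iff₀ (by positivity)).1 hAss1)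
    (abs_nonneg _) hlam.le (by gcongr; omega) hvX hU hD

/-- under Assumption 1, `|d_i| ≤ ¼|x†_{i_A}| + ¼λ` for every `i ∉ A†`. -/
theorem stmt_13 {n p : ℕ} (Ψ : Matrix (Fin n) (Fin p) ℝ)
    (xdag : Fin p → ℝ) (Adag : Finset (Fin p))
    (hAdag : Adag = Finset.univ.filter (fun i => xdag i ≠ 0))
    (T : ℕ) (hT : T = Adag.card)
    (y : Fin n → ℝ) (hy : y = Ψ *ᵥ xdag)
    (δ : ℝ) (hδ0 : 0 < δ) (hδ1 : δ < 1)
    (hRIP : HasRIP Ψ (T + 1) δ)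
    (hAss1 : δ ≤ 1 / (4 * Real.sqrt T + 1))
    (lam : ℝ) (hlam : 0 < lam)
    (A : Finset (Fin p)) (hA : A ⊆ Adag)
    (B : Finset (Fin p)) (hB : B = Adag \ A)
    (d : Fin p → ℝ) (hdA : ∀ i ∈ A, |d i| = lam)
    (xA : {i // i ∈ A} → ℝ)
    (hxA : xA = ((colSub Ψ A)ᵀ * colSub Ψ A)⁻¹ *ᵥ ((colSub Ψ A)ᵀ *ᵥ y - fun j => d j.1))
    (hdI : ∀ i ∉ A, d i = (Ψᵀ *ᵥ (y - colSub Ψ A *ᵥ xA)) i)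
    (iA : Fin p) (hiA : iA ∉ A) (hmax : ∀ j ∉ A, |xdag j| ≤ |xdag iA|) :
    ∀ i ∉ Adag, |d i| ≤ 1 / 4 * |xdag iA| + 1 / 4 * lam :=
  stmt_13_general Ψ xdag Adag hAdag T hT y hy δ hδ0 hδ1 hRIP hAss1 lam hlam A hA B hB d hdA xA hxA
    hdI iA hmax
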